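/- arXiv:math/0610622 — 2 statements merged into one kernel-verified Lean document; each statement's English description precedes it below -/
import Mathlib

section
/- For the Dirac symbol D(x,ξ) = α·(cξ − eA(x)) + β mc² + e v(x), where v(x) = diag(v₊(x)I₂, v₋(x)I₂) and |e(v₊(x) − v₋(x))| < 2mc², the matrix D(x,ξ) has exactly the two eigenvalues H±(x,ξ) = ±√(|cξ − eA(x)|² + (mc² + (e/2)(v₊ − v₋)(x))²) + (e/2)(v₊ + v₋)(x), each of multiplicity two. -/
/-! The symbol is the block matrix `[[p, σ·a], [σ·a, q]]` with scalar diagonal blocks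
`p = mc² + ev₊`, `q = ev₋ − mc²`, and `(σ·a)² = |a|²`. Scalar blocks commute with everything, so
the characteristic polynomial is the determinant of `((X − p)(X − q) − |a|²) • 1` on `ℂ²`, and
the quadratic factors as `(X − H⁺)(X − H⁻)` because `H⁺ + H⁻ = p + q` and `H⁺H⁻ = pq − |a|²`. -/

open Matrix Complex Polynomial

noncomputable section

def pauli : Fin 3 → Matrix (Fin 2) (Fin 2) ℂ
  | 0 => !![0, 1; 1, 0]
  | 1 => !![0, -Complex.I; Complex.I, 0]
  | 2 => !![1, 0; 0, -1]

abbrev Dir4 := Matrix (Fin 2 ⊕ Fin 2) (Fin 2 ⊕ Fin 2) ℂ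

def diracAlpha (i : Fin 3) : Dir4 := Matrix.fromBlocks 0 (pauli i) (pauli i) 0

def diracBeta : Dir4 := Matrix.fromBlocks 1 0 0 (-1)

open scoped nonZeroDivisors

namespace Matrix

variable {R : Type*} [CommRing R] {n : Type*} [Fintype n] [DecidableEq n]

theorem det_fromBlocks_smul_one_of_mem_nonZeroDivisors (x : R) {y : R} (hy : y ∈ R⁰)
    (M N : Matrix n n R) :
    (fromBlocks (x • 1) M N (y • 1)).det = ((x * y) • 1 - M * N).det := by
  have hfactor : fromBlocks (x • 1) M N (y • 1) * fromBlocks (y • 1) 0 (-N) 1 =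
      fromBlocks ((x * y) • 1 - M * N) M 0 (y • 1) := by
    rw [fromBlocks_multiply]
    congr 1 <;> simp [smul_smul, sub_eq_add_neg, add_comm, mul_comm y x]
  have hdet := congrArg det hfactor
  rw [det_mul, det_fromBlocks_zero₁₂, det_fromBlocks_zero₂₁, det_smul] at hdet
  simp only [det_one, mul_one] at hdet
  exact (mul_cancel_right_mem_nonZeroDivisors (pow_mem hy _)).mp hdet

theorem charmatrix_smul_one (p : R) : charmatrix (p • 1 : Matrix n n R) = (X - C p) • 1 := by
  ext i j
  by_cases h : i = j <;> simp [h]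

theorem charpoly_fromBlocks_smul_one (p q r : R) {M N : Matrix n n R} (hMN : M * N = r • 1) :
    (fromBlocks (p • 1) M N (q • 1)).charpoly =
      ((X - C p) * (X - C q) - C r) ^ Fintype.card n := by
  have hprod : -M.map C * -N.map C = C r • (1 : Matrix n n R[X]) := by
    rw [neg_mul_neg, ← Matrix.map_mul, hMN]
    ext i j
    by_cases h : i = j <;> simp [h]
  rw [charpoly, charmatrix_fromBlocks, charmatrix_smul_one, charmatrix_smul_one,
    det_fromBlocks_smul_one_of_mem_nonZeroDivisors _ (monic_X_sub_C q).mem_nonZeroDivisors,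
    hprod, ← sub_smul, det_smul, det_one, mul_one]

end Matrix

theorem Polynomial.X_sub_C_mul_X_sub_C_sub_C {R : Type*} [CommRing R] {p q r s t : R}
    (hsum : s + t = p + q) (hprod : s * t = p * q - r) :
    (X - C p) * (X - C q) - C r = (X - C s) * (X - C t) := by
  have hsum' := congrArg C hsum
  have hprod' := congrArg C hprod
  simp only [C_add, C_mul, C_sub] at hsum' hprod'
  linear_combination X * hsum' - hprod'

def pauliDot (a : Fin 3 → ℂ) : Matrix (Fin 2) (Fin 2) ℂ := ∑ i, a i • pauli i

theorem pauliDot_mul_self (a : Fin 3 → ℂ) : pauliDot a * pauliDot a = (∑ i, a i ^ 2) • 1 := by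
  ext i j
  fin_cases i <;> fin_cases j <;>
    simp [pauliDot, pauli, Fin.sum_univ_three, Matrix.mul_apply] <;> ring_nf <;> simp [I_sq]

theorem sum_smul_diracAlpha (a : Fin 3 → ℂ) :
    ∑ i, a i • diracAlpha i = fromBlocks 0 (pauliDot a) (pauliDot a) 0 := by
  simp [diracAlpha, pauliDot, Fin.sum_univ_three, fromBlocks_smul, fromBlocks_add]

theorem dirac_eq_fromBlocks (a : Fin 3 → ℂ) (M e vp vm : ℂ) :
    (∑ i, a i • diracAlpha i) + M • diracBeta + e • fromBlocks (vp • 1) 0 0 (vm • 1) =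
      fromBlocks ((M + e * vp) • 1) (pauliDot a) (pauliDot a) ((e * vm - M) • 1) := by
  simp [sum_smul_diracAlpha, diracBeta, fromBlocks_smul, fromBlocks_add, smul_smul, add_smul,
    sub_eq_add_neg, add_comm]

theorem dirac_electromagnetic_eigenvalues_general (a : Fin 3 → ℝ) (vp vm m c e : ℝ)
    (hv : |e * (vp - vm)| < 2 * m * c ^ 2) :
    let D : Dir4 := (∑ i, (a i : ℂ) • diracAlpha i) + ((m * c ^ 2 : ℝ) : ℂ) • diracBeta +
      ((e : ℝ) : ℂ) • Matrix.fromBlocks (((vp : ℝ) : ℂ) • 1) 0 0 (((vm : ℝ) : ℂ) • 1)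
    let Hp : ℝ := Real.sqrt ((∑ i, a i ^ 2) + (m * c ^ 2 + e / 2 * (vp - vm)) ^ 2)
      + e / 2 * (vp + vm)
    let Hm : ℝ := -Real.sqrt ((∑ i, a i ^ 2) + (m * c ^ 2 + e / 2 * (vp - vm)) ^ 2)
      + e / 2 * (vp + vm)
    Hp ≠ Hm ∧
    D.charpoly = ((X - C ((Hp : ℝ) : ℂ)) * (X - C ((Hm : ℝ) : ℂ))) ^ 2 := by
  intro D Hp Hm
  have hgap : 0 < m * c ^ 2 + e / 2 * (vp - vm) := by linarith [(abs_lt.mp hv).1]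
  set S := Real.sqrt ((∑ i, a i ^ 2) + (m * c ^ 2 + e / 2 * (vp - vm)) ^ 2)
  have hsq : S ^ 2 = (∑ i, a i ^ 2) + (m * c ^ 2 + e / 2 * (vp - vm)) ^ 2 :=
    Real.sq_sqrt (by positivity)
  have hpos : 0 < S := Real.sqrt_pos.mpr (by positivity)
  have hsum : ((Hp : ℝ) : ℂ) + Hm = (m * c ^ 2 : ℝ) + e * vp + (e * vm - (m * c ^ 2 : ℝ)) := by
    have : Hp + Hm = m * c ^ 2 + e * vp + (e * vm - m * c ^ 2) := by simp only [Hp, Hm]; ring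
    exact_mod_cast this
  have hprod : ((Hp : ℝ) : ℂ) * Hm =
      ((m * c ^ 2 : ℝ) + e * vp) * (e * vm - (m * c ^ 2 : ℝ)) - ∑ i, (a i : ℂ) ^ 2 := by
    have : Hp * Hm = (m * c ^ 2 + e * vp) * (e * vm - m * c ^ 2) - ∑ i, a i ^ 2 := by
      simp only [Hp, Hm]; linear_combination -hsq
    exact_mod_cast this
  refine ⟨fun h => by simp only [Hp, Hm] at h; linarith, ?_⟩
  rw [show D = _ from dirac_eq_fromBlocks _ _ _ _ _,
    charpoly_fromBlocks_smul_one _ _ _ (pauliDot_mul_self _), Fintype.card_fin,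
    X_sub_C_mul_X_sub_C_sub_C hsum hprod]

/-- For the Dirac symbol `D = α·a + βmc² + e·diag(v₊I₂, v₋I₂)` (with `a = cξ − eA(x)`
fixed), under `|e(v₊ − v₋)| < 2mc²`, `D` has exactly the two eigenvalues
`H± = ±√(|a|² + (mc² + (e/2)(v₊ − v₋))²) + (e/2)(v₊ + v₋)`, each of multiplicity two,
i.e. its characteristic polynomial is `((X − H⁺)(X − H⁻))²` with `H⁺ ≠ H⁻`. -/
theorem dirac_electromagnetic_eigenvalues (a : Fin 3 → ℝ) (vp vm m c e : ℝ)
    (hm : 0 < m) (hc : 0 < c) (he : e < 0) (hv : |e * (vp - vm)| < 2 * m * c ^ 2) :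
    let D : Dir4 := (∑ i, (a i : ℂ) • diracAlpha i) + ((m * c ^ 2 : ℝ) : ℂ) • diracBeta +
      ((e : ℝ) : ℂ) • Matrix.fromBlocks (((vp : ℝ) : ℂ) • 1) 0 0 (((vm : ℝ) : ℂ) • 1)
    let Hp : ℝ := Real.sqrt ((∑ i, a i ^ 2) + (m * c ^ 2 + e / 2 * (vp - vm)) ^ 2)
      + e / 2 * (vp + vm)
    let Hm : ℝ := -Real.sqrt ((∑ i, a i ^ 2) + (m * c ^ 2 + e / 2 * (vp - vm)) ^ 2)
      + e / 2 * (vp + vm)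
    Hp ≠ Hm ∧
    D.charpoly = ((X - C ((Hp : ℝ) : ℂ)) * (X - C ((Hm : ℝ) : ℂ))) ^ 2 :=
  dirac_electromagnetic_eigenvalues_general a vp vm m c e hv
end
end

section
/- Let p = (p₁, ..., p₅) ∈ ℝ⁵ and G(p) = p₁α₁ + p₂α₂ + p₃α₃ + p₄β + p₅I₄ with the standard Dirac matrices. Suppose for some point p the value λ(p) = p₅ + √(p₁² + p₂² + p₃² + p₄²) is an eigenvalue of G(p) with eigenvectors B₁, B₂ (orthonormal), and p₁² + ... + p₄² > 0. Then for each μ ∈ {1,...,5} and j, k ∈ {1,2}: Bⱼ† M_μ B_k = (∂λ/∂p_μ)(p) δ_{jk}, where M_μ = α_μ for μ ≤ 3, M₄ = β, M₅ = I₄, provided B₁(p), B₂(p) are differentiable orthonormal eigenvector fields near p. In particular, for μ = 5 this gives Bⱼ†B_k = δ_{jk}, and for μ ≤ 4, Bⱼ† M_μ B_k = (p_μ/√(p₁²+p₂²+p₃²+p₄²)) δ_{jk}. -/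
open Matrix Complex

noncomputable section

/-- The five coefficient matrices `M₁ = α₁, M₂ = α₂, M₃ = α₃, M₄ = β, M₅ = I₄`. -/
def diracM : Fin 5 → Dir4 := ![diracAlpha 0, diracAlpha 1, diracAlpha 2, diracBeta, 1]

lemma pauli_anticomm : ∀ i j : Fin 3, pauli i * pauli j + pauli j * pauli i
    = if i = j then (2:ℂ) • 1 else 0 := by
  intro i j
  fin_cases i <;> fin_cases j <;>
    simp only [pauli, Matrix.mul_fin_two] <;>
    ext a b <;> fin_cases a <;> fin_cases b <;>
    simp [Matrix.one_apply, Complex.ext_iff] <;> ring_nf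

lemma pauli_herm : ∀ i : Fin 3, (pauli i)ᴴ = pauli i := by
  intro i
  fin_cases i <;> ext a b <;> fin_cases a <;> fin_cases b <;>
    simp [pauli, Matrix.conjTranspose_apply]

lemma diracM_herm : ∀ μ : Fin 5, (diracM μ)ᴴ = diracM μ := by
  intro μ
  fin_cases μ <;>
    simp [diracM, diracAlpha, diracBeta, Matrix.fromBlocks_conjTranspose, pauli_herm]

lemma pauli_sq (i : Fin 3) : pauli i * pauli i = 1 := by
  have h := pauli_anticomm i i
  simp only [if_pos rfl, if_true, eq_self_iff_true] at h
  have h2 : (2:ℂ) • (pauli i * pauli i) = (2:ℂ) • (1 : Matrix (Fin 2) (Fin 2) ℂ) := by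
    rw [two_smul, h]
  exact smul_right_injective _ (two_ne_zero) h2

lemma pauli_anti {i j : Fin 3} (h : i ≠ j) :
    pauli i * pauli j + pauli j * pauli i = 0 := by
  have := pauli_anticomm i j
  simpa [if_neg h] using this

lemma diracM_anticomm : ∀ μ ν : Fin 5, μ ≠ 4 → ν ≠ 4 →
    diracM μ * diracM ν + diracM ν * diracM μ = if μ = ν then (2:ℂ) • 1 else 0 := by
  intro μ ν hμ hν
  fin_cases μ <;> fin_cases ν <;> simp_all <;>
    simp [diracM, diracAlpha, diracBeta, Matrix.fromBlocks_multiply,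
      Matrix.fromBlocks_add, ← Matrix.fromBlocks_one, ← Matrix.fromBlocks_smul,
      pauli_sq, pauli_anti, show ((0:Fin 3) ≠ 1) from (by decide),
      show ((0:Fin 3) ≠ 2) from (by decide), show ((1:Fin 3) ≠ 2) from (by decide),
      show ((1:Fin 3) ≠ 0) from (by decide), show ((2:Fin 3) ≠ 0) from (by decide),
      show ((2:Fin 3) ≠ 1) from (by decide), two_smul] <;>
    first
      | rfl
      | (rw [add_comm]; first
          | exact pauli_anti (by decide)
          | simp [pauli_anti (show ((0:Fin 3) ≠ 1) from (by decide))]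
          | simp [pauli_anti (show ((0:Fin 3) ≠ 2) from (by decide))]
          | simp [pauli_anti (show ((1:Fin 3) ≠ 2) from (by decide))])
      | ring

/-- Hellmann–Feynman identity for `G(p) = Σ p_μ M_μ`: if `B₁, B₂` are orthonormal
eigenvectors of `G(p)` for the eigenvalue `λ(p) = p₅ + √(p₁²+p₂²+p₃²+p₄²)` and
`p₁²+⋯+p₄² > 0`, then `Bⱼ† M_μ B_k = (∂λ/∂p_μ)(p) δⱼₖ`, i.e. `Bⱼ† B_k = δⱼₖ`
(the case `μ = 5`) and `Bⱼ† M_μ B_k = (p_μ/√(p₁²+⋯+p₄²)) δⱼₖ` for `μ ≤ 4`. -/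
theorem hellmann_feynman_dirac (p : Fin 5 → ℝ)
    (hr : 0 < p 0 ^ 2 + p 1 ^ 2 + p 2 ^ 2 + p 3 ^ 2)
    (B : Fin 2 → (Fin 2 ⊕ Fin 2) → ℂ)
    (horth : ∀ j k : Fin 2, star (B j) ⬝ᵥ B k = if j = k then 1 else 0)
    (heig : ∀ j : Fin 2,
      (∑ μ, ((p μ : ℝ) : ℂ) • diracM μ) *ᵥ B j =
        (((p 4 + Real.sqrt (p 0 ^ 2 + p 1 ^ 2 + p 2 ^ 2 + p 3 ^ 2) : ℝ) : ℂ)) • B j) :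
    ∀ (μ : Fin 5) (j k : Fin 2),
      star (B j) ⬝ᵥ (diracM μ *ᵥ B k) =
        (((if μ = 4 then 1 else
            p μ / Real.sqrt (p 0 ^ 2 + p 1 ^ 2 + p 2 ^ 2 + p 3 ^ 2) : ℝ)) : ℂ) *
          (if j = k then 1 else 0) := by
  intro μ j k
  set r : ℝ := Real.sqrt (p 0 ^ 2 + p 1 ^ 2 + p 2 ^ 2 + p 3 ^ 2) with hrdef
  have hrpos : 0 < r := Real.sqrt_pos.mpr hr
  by_cases hμ : μ = 4
  · subst hμ
    have h4 : diracM 4 = 1 := by simp [diracM]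
    rw [h4, Matrix.one_mulVec, horth]
    norm_num
  · -- coefficients for A = Σ_{ν ≤ 3} p_ν M_ν
    set cc : Fin 5 → ℂ := ![(p 0 : ℂ), (p 1 : ℂ), (p 2 : ℂ), (p 3 : ℂ), 0] with hcc
    set A : Dir4 := ∑ ν : Fin 5, cc ν • diracM ν with hAdef
    have hA : ∀ j : Fin 2, A *ᵥ B j = ((r : ℂ)) • B j := by
      intro i
      have h := heig i
      have hsplit : (∑ ν : Fin 5, ((p ν : ℝ) : ℂ) • diracM ν) = A + ((p 4 : ℂ)) • 1 := by
        rw [hAdef]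
        simp [Fin.sum_univ_five, hcc, diracM]
      rw [hsplit, Matrix.add_mulVec, Matrix.smul_mulVec, Matrix.one_mulVec,
        Complex.ofReal_add, add_smul,
        add_comm (((p 4 : ℝ) : ℂ) • B i) (((r : ℝ) : ℂ) • B i)] at h
      exact add_right_cancel h
    have hAherm : Aᴴ = A := by
      rw [hAdef]
      rw [Matrix.conjTranspose_sum]
      refine Finset.sum_congr rfl fun ν _ => ?_
      rw [Matrix.conjTranspose_smul, diracM_herm]
      congr 1
      fin_cases ν <;> simp [hcc, Complex.star_def, Complex.conj_ofReal]
    have hanti : diracM μ * A + A * diracM μ = ((2 * p μ : ℝ) : ℂ) • 1 := by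
      rw [hAdef, Finset.mul_sum, Finset.sum_mul, ← Finset.sum_add_distrib]
      have : ∀ ν : Fin 5, diracM μ * (cc ν • diracM ν) + (cc ν • diracM ν) * diracM μ
          = cc ν • (if μ = ν then (2:ℂ) • 1 else 0) := by
        intro ν
        by_cases hν : ν = 4
        · subst hν
          simp [hcc, if_neg (Ne.symm hμ)]
        · rw [Matrix.mul_smul, Matrix.smul_mul, ← smul_add, diracM_anticomm μ ν hμ hν]
      simp_rw [this]
      have hcc0 : cc 0 = (p 0 : ℂ) := by simp [hcc]
      have hcc1 : cc 1 = (p 1 : ℂ) := by simp [hcc]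
      have hcc2 : cc 2 = (p 2 : ℂ) := by simp [hcc]
      have hcc3 : cc 3 = (p 3 : ℂ) := by simp [hcc]
      fin_cases μ <;>
        simp_all [Fin.sum_univ_five, smul_smul] <;> push_cast <;> ring_nf
    set T := star (B j) ⬝ᵥ (diracM μ *ᵥ B k) with hT
    have e1 : star (B j) ⬝ᵥ ((diracM μ * A + A * diracM μ) *ᵥ B k)
        = ((2 * p μ : ℝ) : ℂ) * (if j = k then 1 else 0) := by
      rw [hanti, Matrix.smul_mulVec, Matrix.one_mulVec, dotProduct_smul, horth]
      simp
    have e2 : star (B j) ⬝ᵥ ((diracM μ * A + A * diracM μ) *ᵥ B k)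
        = 2 * (r : ℂ) * T := by
      rw [Matrix.add_mulVec]
      rw [dotProduct_add]
      have t1 : star (B j) ⬝ᵥ ((diracM μ * A) *ᵥ B k) = (r : ℂ) * T := by
        rw [← Matrix.mulVec_mulVec, hA, Matrix.mulVec_smul, dotProduct_smul, hT]
        simp
      have t2 : star (B j) ⬝ᵥ ((A * diracM μ) *ᵥ B k) = (r : ℂ) * T := by
        rw [← Matrix.mulVec_mulVec, Matrix.dotProduct_mulVec]
        have : star (B j) ᵥ* A = (r : ℂ) • star (B j) := by
          rw [← hAherm, ← Matrix.star_mulVec, hA j, star_smul]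
          simp [Complex.star_def, Complex.conj_ofReal]
        rw [this, smul_dotProduct, hT]
        simp
      rw [t1, t2]; ring
    have key : 2 * (r : ℂ) * T = ((2 * p μ : ℝ) : ℂ) * (if j = k then 1 else 0) := by
      rw [← e2, e1]
    have hrne : (r : ℂ) ≠ 0 := by
      exact_mod_cast ne_of_gt hrpos
    rw [if_neg hμ]
    have : T = ((p μ : ℂ) / (r : ℂ)) * (if j = k then 1 else 0) := by
      push_cast at key
      by_cases hjk : j = k
      · simp only [if_pos hjk, mul_one] at key ⊢
        field_simp
        linear_combination key / 2
      · simp only [if_neg hjk, mul_zero] at key ⊢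
        have h2 : (2 : ℂ) * (r : ℂ) ≠ 0 := by simp [hrne]
        exact (mul_eq_zero.mp key).resolve_left h2
    rw [this]
    push_cast
    ring
end
end
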